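/- arXiv:1406.0786 — 2 statements merged into one kernel-verified Lean document; each statement's English description precedes it below -/
import Mathlib

section
/- The multiplicity of the sign representation of $\mathcal{S}_k$ in the permutation representation $\mathbb{Q}\,\mathcal{F}([n],[k])$ (where $\mathcal{S}_k$ acts by postcomposition on the set of all functions from $[n]$ to $[k]$) equals $S(n,k-1) + S(n,k)$, where $S(n,j)$ denotes the Stirling number of the second kind. -/
/-- Stirling numbers of the second kind: `stirling2 n j` counts the partitions of an
`n`-element set into exactly `j` nonempty blocks. -/
def stirling2 : ℕ → ℕ → ℕ
  | 0, 0 => 1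
  | 0, _ + 1 => 0
  | _ + 1, 0 => 0
  | n + 1, j + 1 => (j + 1) * stirling2 n (j + 1) + stirling2 n j

/-- The action of `S_k` on functions `[n] → [k]` by postcomposition. -/
instance postcompAction (n k : ℕ) : MulAction (Equiv.Perm (Fin k)) (Fin n → Fin k) where
  smul σ f := ⇑σ ∘ f
  one_smul f := rfl
  mul_smul σ τ f := rfl

/-- The sign-isotypic subspace of a permutation representation `ℚX` of `S_k`. -/
def signIsotypic (k : ℕ) (X : Type*) [MulAction (Equiv.Perm (Fin k)) X] :
    Submodule ℚ (X → ℚ) where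
  carrier := {v | ∀ (σ : Equiv.Perm (Fin k)) (x : X),
    v (σ • x) = ((Equiv.Perm.sign σ : ℤ) : ℚ) * v x}
  add_mem' := by
    intro a b ha hb σ x
    simp only [Pi.add_apply, ha σ x, hb σ x]
    ring
  zero_mem' := by intro σ x; simp
  smul_mem' := by
    intro c a ha σ x
    simp only [Pi.smul_apply, smul_eq_mul, ha σ x]
    ring

/-!
A vector of the sign-isotypic part of a permutation representation is determined by its values
on orbit representatives, and its value at `x` is forced to vanish exactly when the stabilizer
of `x` contains an odd permutation. So the multiplicity of the sign is the number of orbits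
whose stabilizer lies in the alternating group.

The stabilizer of `f : [n] → [k]` is the symmetric group on the complement of the image of `f`;
it contains a transposition iff `f` misses at least two values. The orbit of a function with
`j` values has `k! / (k - j)!` elements, and the number of such functions satisfies the
recursion of `S(n, j) · k! / (k - j)!`, so there are `S(n, j)` such orbits.
-/

open Equiv MulAction Finset

section Orbits

variable {G X : Type*} [Group G] [MulAction G X]

theorem exists_smul_out_eq (x : X) :
    ∃ g : G, g • (Quotient.mk'' x : orbitRel.Quotient G X).out = x := by
  obtain ⟨g, hg⟩ := Quotient.mk_out (s := orbitRel G X) x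
  exact ⟨g⁻¹, by rw [← hg, inv_smul_smul]⟩

theorem card_orbits_mul_eq_card [Fintype X] (p : X → Prop) [DecidablePred p]
    (hp : ∀ (g : G) x, p (g • x) ↔ p x) {m : ℕ} (hm : ∀ x, p x → Nat.card (orbit G x) = m) :
    Nat.card {ω : orbitRel.Quotient G X // p ω.out} * m = #{x | p x} := by
  classical
  have hout (x : X) : p (Quotient.mk'' x : orbitRel.Quotient G X).out ↔ p x := by
    obtain ⟨g, hg⟩ := exists_smul_out_eq (G := G) x
    rw [← hp g, hg]
  have himage : ({x | p x} : Finset X).image Quotient.mk'' =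
      ({ω | p ω.out} : Finset (orbitRel.Quotient G X)) := by
    ext ω
    induction ω using Quotient.inductionOn' with | h x =>
    simp only [mem_image, mem_filter, mem_univ, true_and, hout]
    exact ⟨fun ⟨a, ha, hax⟩ => (hout x).1 (hax ▸ (hout a).2 ha), fun hx => ⟨x, hx, rfl⟩⟩
  have hfiber : ∀ ω ∈ ({x | p x} : Finset X).image Quotient.mk'',
      #{x ∈ ({x | p x} : Finset X) | (Quotient.mk'' x : orbitRel.Quotient G X) = ω} = m := by
    simp only [mem_image, mem_filter, mem_univ, true_and]
    rintro _ ⟨x₀, hx₀, rfl⟩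
    rw [← hm x₀ hx₀, Nat.card_eq_card_toFinset]
    congr 1
    ext x
    have hxx₀ : (Quotient.mk'' x : orbitRel.Quotient G X) = Quotient.mk'' x₀ ↔ x ∈ orbit G x₀ :=
      Quotient.eq''
    simp only [mem_filter, mem_univ, true_and, Set.mem_toFinset, hxx₀]
    refine ⟨And.right, fun hx => ⟨?_, hx⟩⟩
    obtain ⟨g, rfl⟩ := hx
    exact (hp g x₀).2 hx₀
  rw [card_eq_sum_card_image (Quotient.mk'' : X → orbitRel.Quotient G X), sum_congr rfl hfiber,
    sum_const, smul_eq_mul, himage, Nat.card_eq_fintype_card, Fintype.card_subtype]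

end Orbits

section SignIsotypic

variable (k : ℕ) {X : Type*} [MulAction (Perm (Fin k)) X]

def SignTrivialOnStabilizer (x : X) : Prop :=
  ∀ σ : Perm (Fin k), σ • x = x → Perm.sign σ = 1

variable (X) in
abbrev SignTrivialOrbit : Type _ :=
  {ω : orbitRel.Quotient (Perm (Fin k)) X // SignTrivialOnStabilizer k ω.out}

variable {k}

theorem apply_eq_zero_of_not_signTrivialOnStabilizer {v : X → ℚ} (hv : v ∈ signIsotypic k X)
    {x : X} (hx : ¬SignTrivialOnStabilizer k x) : v x = 0 := by
  obtain ⟨σ, hσx, hσ⟩ : ∃ σ : Perm (Fin k), σ • x = x ∧ Perm.sign σ = -1 := by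
    simpa [SignTrivialOnStabilizer, Int.units_ne_iff_eq_neg] using hx
  have h := hv σ x
  rw [hσx, hσ] at h
  push_cast at h
  linarith

theorem SignTrivialOnStabilizer.sign_eq {x : X} (hx : SignTrivialOnStabilizer k x)
    {σ τ : Perm (Fin k)} (h : σ • x = τ • x) : Perm.sign σ = Perm.sign τ := by
  have h1 := hx (τ⁻¹ * σ) (by rw [mul_smul, h, inv_smul_smul])
  rwa [map_mul, map_inv, inv_mul_eq_one, eq_comm] at h1

noncomputable def orbitRepValues : signIsotypic k X →ₗ[ℚ] (SignTrivialOrbit k X → ℚ) where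
  toFun v ω := v.1 ω.1.out
  map_add' _ _ := rfl
  map_smul' _ _ := rfl

theorem orbitRepValues_injective : Function.Injective (orbitRepValues (k := k) (X := X)) := by
  rw [injective_iff_map_eq_zero]
  intro v hv
  ext x
  obtain ⟨σ, hσ⟩ := exists_smul_out_eq (G := Perm (Fin k)) x
  set x₀ := (Quotient.mk'' x : orbitRel.Quotient (Perm (Fin k)) X).out
  have hout : v.1 x₀ = 0 := by
    by_cases h : SignTrivialOnStabilizer k x₀
    · exact congrFun hv ⟨_, h⟩
    · exact apply_eq_zero_of_not_signTrivialOnStabilizer v.2 h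
  rw [← hσ, v.2 σ, hout, mul_zero]
  rfl

theorem orbitRepValues_surjective : Function.Surjective (orbitRepValues (k := k) (X := X)) := by
  classical
  intro w
  choose rep hrep using exists_smul_out_eq (G := Perm (Fin k)) (X := X)
  let w' (ω : orbitRel.Quotient (Perm (Fin k)) X) : ℚ :=
    if h : SignTrivialOnStabilizer k ω.out then w ⟨ω, h⟩ else 0
  refine ⟨⟨fun x => Perm.sign (rep x) * w' (Quotient.mk'' x), fun σ x => ?_⟩, ?_⟩
  · have hmk : (Quotient.mk'' (σ • x) : orbitRel.Quotient (Perm (Fin k)) X) = Quotient.mk'' x :=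
      Quotient.sound ⟨σ, rfl⟩
    simp only [hmk]
    by_cases h : SignTrivialOnStabilizer k
        (Quotient.mk'' x : orbitRel.Quotient (Perm (Fin k)) X).out
    · have hsign : Perm.sign (rep (σ • x)) = Perm.sign (σ * rep x) :=
        h.sign_eq (by rw [mul_smul, hrep, ← hmk, hrep])
      rw [hsign, map_mul]
      push_cast
      ring
    · simp [w', h]
  · funext ω
    have hω : (Quotient.mk'' ω.1.out : orbitRel.Quotient (Perm (Fin k)) X) = ω.1 :=
      Quotient.out_eq' _
    have hsign : Perm.sign (rep ω.1.out) = 1 := ω.2 _ (by simpa only [hω] using hrep ω.1.out)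
    simp only [orbitRepValues, LinearMap.coe_mk, AddHom.coe_mk, hsign, hω, w', dif_pos ω.2]
    simp

theorem finrank_signIsotypic [Finite X] :
    Module.finrank ℚ (signIsotypic k X) = Nat.card (SignTrivialOrbit k X) := by
  have := Fintype.ofFinite (SignTrivialOrbit k X)
  rw [(LinearEquiv.ofBijective _ ⟨orbitRepValues_injective, orbitRepValues_surjective⟩).finrank_eq,
    Module.finrank_fintype_fun_eq_card, Nat.card_eq_fintype_card]

end SignIsotypic

section Functions

variable {n k : ℕ}

theorem smul_eq_self_iff {σ : Perm (Fin k)} {f : Fin n → Fin k} :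
    σ • f = f ↔ ∀ y ∈ univ.image f, σ y = y := by
  change ⇑σ ∘ f = f ↔ _
  simp [funext_iff]

theorem card_image_smul (σ : Perm (Fin k)) (f : Fin n → Fin k) :
    #(univ.image (σ • f)) = #(univ.image f) := by
  change #(univ.image (⇑σ ∘ f)) = _
  rw [← image_image, card_image_of_injective _ σ.injective]

theorem signTrivialOnStabilizer_iff {f : Fin n → Fin k} :
    SignTrivialOnStabilizer k f ↔ k ≤ #(univ.image f) + 1 := by
  have hcompl : #(univ.image f)ᶜ = k - #(univ.image f) := by
    rw [card_compl, Fintype.card_fin]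
  constructor
  · intro hf
    by_contra! hlt
    obtain ⟨a, ha, b, hb, hab⟩ := one_lt_card.1 (show 1 < #(univ.image f)ᶜ by omega)
    have hswap : swap a b • f = f := smul_eq_self_iff.2 fun y hy =>
      swap_apply_of_ne_of_ne (by rintro rfl; simp_all) (by rintro rfl; simp_all)
    have := hf _ hswap
    rw [Perm.sign_swap hab] at this
    exact absurd this (by decide)
  · intro hf σ hσ
    have hsupp : σ.support ⊆ (univ.image f)ᶜ := fun y hy =>
      mem_compl.2 fun hmem => Perm.mem_support.1 hy (smul_eq_self_iff.1 hσ y hmem)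
    have hcard : #σ.support = 0 := by
      have := card_le_card hsupp
      have := σ.card_support_ne_one
      omega
    rw [card_eq_zero, Perm.support_eq_empty_iff] at hcard
    rw [hcard, map_one]

theorem card_orbit_eq_descFactorial (f : Fin n → Fin k) :
    Nat.card (orbit (Perm (Fin k)) f) = k.descFactorial #(univ.image f) := by
  classical
  have hstab : stabilizer (Perm (Fin k)) f ≃ Perm {y // y ∉ univ.image f} :=
    calc stabilizer (Perm (Fin k)) f
        ≃ {σ : Perm (Fin k) // ∀ y, ¬y ∉ univ.image f → σ y = y} :=
          Equiv.subtypeEquivRight fun σ => by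
            rw [mem_stabilizer_iff, smul_eq_self_iff]
            simp only [not_not]
      _ ≃ Perm {y // y ∉ univ.image f} := (Perm.subtypeEquivSubtypePerm _).symm
  have hstab_card : Nat.card (stabilizer (Perm (Fin k)) f) = (k - #(univ.image f)).factorial := by
    rw [Nat.card_congr hstab, Nat.card_perm, Nat.card_eq_fintype_card, Fintype.card_subtype_compl,
      Fintype.card_coe, Fintype.card_fin]
  have hle : #(univ.image f) ≤ k := (card_le_univ _).trans_eq (Fintype.card_fin k)
  have h := (stabilizer (Perm (Fin k)) f).card_mul_index
  rw [index_stabilizer, ← Nat.card_coe_set_eq, hstab_card, Nat.card_perm, Nat.card_fin,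
    ← Nat.factorial_mul_descFactorial hle] at h
  exact Nat.eq_of_mul_eq_mul_left (Nat.factorial_pos _) h

end Functions

section Counting

theorem card_filter_card_insert_eq {α : Type*} [Fintype α] [DecidableEq α] (s : Finset α)
    (j : ℕ) : #{c | #(insert c s) = j + 1} =
      (if #s = j + 1 then j + 1 else 0) + (if #s = j then Fintype.card α - j else 0) := by
  have hin : ∑ c ∈ s, (if #(insert c s) = j + 1 then 1 else 0) =
      ∑ _c ∈ s, (if #s = j + 1 then 1 else 0) :=
    sum_congr rfl fun c hc => by rw [insert_eq_of_mem hc]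
  have hout : ∑ c ∈ sᶜ, (if #(insert c s) = j + 1 then 1 else 0) =
      ∑ _c ∈ sᶜ, (if #s = j then 1 else 0) :=
    sum_congr rfl fun c hc => by
      simp only [card_insert_of_notMem (mem_compl.1 hc), Nat.add_right_cancel_iff]
  rw [card_filter, ← sum_add_sum_compl s, hin, hout, sum_const, sum_const, card_compl,
    smul_eq_mul, smul_eq_mul]
  split_ifs <;> omega

theorem image_univ_cons {n : ℕ} {β : Type*} [DecidableEq β] (c : β) (g : Fin n → β) :
    univ.image (Fin.cons c g : Fin (n + 1) → β) = insert c (univ.image g) := by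
  ext y
  simp [Fin.exists_fin_succ, eq_comm]

theorem card_filter_card_image_succ (n k j : ℕ) :
    #{f : Fin (n + 1) → Fin k | #(univ.image f) = j + 1} =
      (j + 1) * #{g : Fin n → Fin k | #(univ.image g) = j + 1} +
        (k - j) * #{g : Fin n → Fin k | #(univ.image g) = j} := by
  calc #{f : Fin (n + 1) → Fin k | #(univ.image f) = j + 1}
      = ∑ g : Fin n → Fin k, #{c | #(insert c (univ.image g)) = j + 1} := by
        simp only [card_filter]
        rw [← Fintype.sum_equiv (Fin.consEquiv fun _ => Fin k) _ _ fun _ => rfl,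
          Fintype.sum_prod_type_right]
        simp only [Fin.consEquiv, Equiv.coe_fn_mk, image_univ_cons]
    _ = ∑ g : Fin n → Fin k, ((if #(univ.image g) = j + 1 then j + 1 else 0) +
          (if #(univ.image g) = j then k - j else 0)) := by
        simp only [card_filter_card_insert_eq, Fintype.card_fin]
    _ = _ := by
        simp only [sum_add_distrib, card_filter, mul_sum, mul_boole]

theorem card_filter_card_image_eq (n k j : ℕ) :
    #{f : Fin n → Fin k | #(univ.image f) = j} = stirling2 n j * k.descFactorial j := by
  induction n generalizing j with
  | zero => cases j <;> simp [stirling2]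
  | succ n ih =>
    cases j with
    | zero =>
      rw [stirling2, zero_mul, card_eq_zero, filter_eq_empty_iff]
      intro f _ hf
      rw [card_eq_zero, image_eq_empty] at hf
      exact univ_nonempty.ne_empty hf
    | succ j =>
      rw [card_filter_card_image_succ, ih, ih, stirling2, Nat.descFactorial_succ]
      ring

theorem card_orbits_card_image_eq {n k j : ℕ} (hj : j ≤ k) :
    Nat.card {ω : orbitRel.Quotient (Perm (Fin k)) (Fin n → Fin k) // #(univ.image ω.out) = j} =
      stirling2 n j := by
  have h := card_orbits_mul_eq_card (G := Perm (Fin k))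
    (fun f : Fin n → Fin k => #(univ.image f) = j) (fun σ f => by rw [card_image_smul])
    (fun f hf => hf ▸ card_orbit_eq_descFactorial f)
  rw [card_filter_card_image_eq] at h
  exact Nat.eq_of_mul_eq_mul_right (Nat.descFactorial_pos.2 hj) h

end Counting

/-- The multiplicity of the sign representation of `S_k` in `ℚ F([n],[k])`
(with `S_k` acting by postcomposition) equals `S(n,k-1) + S(n,k)`. -/
theorem sign_multiplicity_in_functions (n k : ℕ) (hk : 1 ≤ k) :
    Module.finrank ℚ (signIsotypic k (Fin n → Fin k)) =
      stirling2 n (k - 1) + stirling2 n k := by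
  have hsplit (f : Fin n → Fin k) : SignTrivialOnStabilizer k f ↔
      #(univ.image f) = k - 1 ∨ #(univ.image f) = k := by
    have := (card_le_univ (univ.image f)).trans_eq (Fintype.card_fin k)
    rw [signTrivialOnStabilizer_iff]
    omega
  rw [finrank_signIsotypic, ← card_orbits_card_image_eq (n := n) (Nat.sub_le k 1),
    ← card_orbits_card_image_eq le_rfl, ← Nat.card_sum]
  have hdisj : Disjoint
      (fun ω : orbitRel.Quotient (Perm (Fin k)) (Fin n → Fin k) => #(univ.image ω.out) = k - 1)
      (fun ω => #(univ.image ω.out) = k) :=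
    Pi.disjoint_iff.2 fun ω => disjoint_iff_inf_le.2 fun ⟨h₁, h₂⟩ => by omega
  exact Nat.card_congr ((Equiv.subtypeEquivRight fun ω => hsplit (Quotient.out ω)).trans
    (subtypeOrEquiv _ _ hdisj))
end

section
/- For $n > k+1 \geq 1$, let $\nu \in \mathbb{Q}\mathcal{F}([n],[n])$ (linear combinations of functions $[n]\to[n]$) be the expansion of the tensor $e_1 \otimes \cdots \otimes e_{n-k-1} \otimes (e_{n-k}-e_{n-k-1}) \otimes (e_{n-k+1}-e_{n-k}) \otimes \cdots \otimes (e_n - e_{n-1})$ under the identification of $\bigotimes^n \mathbb{Q}[n]$ with $\mathbb{Q}\mathcal{F}([n],[n])$ via one-line notation. Then for every function $f : [k] \to [n]$, the composite $f\nu$ (precomposition of each term of $\nu$ with $f$, extended linearly) equals 0. -/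
/-- The identification of `⨂^n ℚ[n]` with `ℚ F([n],[n])` via one-line notation. -/
noncomputable def tensorExpand (n : ℕ) (v : Fin n → Fin n → ℚ) : (Fin n → Fin n) →₀ ℚ :=
  Finsupp.equivFunOnFinite.symm (fun g => ∏ i, v i (g i))

/-! The fibres of precomposition `g ↦ g ∘ f` are products of sets, so the fibre sums of a pure
tensor `v₁ ⊗ ⋯ ⊗ vₙ` factor as products over `i` of partial coefficient sums of `vᵢ`. If `f`
misses `m`, the factor at `m` is the full coefficient sum of `vₘ`, so when that vanishes the
whole precomposite is zero. For `ν`, every factor from position `n - k - 1` on is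
`e_i - e_{i-1}`, with coefficient sum zero, and a map `[k] → [n]` misses one of these `k + 1`
positions. -/

open Finset

section PureTensor

variable {ι κ α R : Type*} [Fintype ι] [DecidableEq ι] [Fintype κ] [Fintype α] [DecidableEq α]
  [CommSemiring R]

theorem sum_filter_comp_eq_prod_sum (v : ι → α → R) (f : κ → ι) (h : κ → α) :
    ∑ g : ι → α with g ∘ f = h, ∏ i, v i (g i) =
      ∏ i, ∑ a with ∀ k, f k = i → h k = a, v i a := by
  rw [prod_univ_sum]
  congr 1
  ext g
  simp only [mem_filter, mem_univ, true_and, Fintype.mem_piFinset, funext_iff, Function.comp_apply]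
  exact ⟨fun hg i k hk => hk ▸ (hg k).symm, fun hg k => (hg _ k rfl).symm⟩

theorem mapDomain_comp_pureTensor_eq_zero (v : ι → α → R) (f : κ → ι) {m : ι}
    (hm : m ∉ Set.range f) (hv : ∑ a, v m a = 0) :
    Finsupp.mapDomain (fun g : ι → α => g ∘ f)
      (Finsupp.equivFunOnFinite.symm fun g => ∏ i, v i (g i)) = 0 := by
  ext h
  rw [← Finsupp.equivFunOnFinite_apply, ← FunOnFinite.map, FunOnFinite.map_apply_apply,
    sum_filter_comp_eq_prod_sum]
  refine prod_eq_zero (mem_univ m) ?_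
  have hmiss : ∀ k, f k ≠ m := fun k hk => hm ⟨k, hk⟩
  simpa [hmiss] using hv

end PureTensor

theorem sum_single_sub_single_pred {R : Type*} [AddCommGroup R] [One R] {n : ℕ} (m : Fin n)
    (hm : 0 < (m : ℕ)) :
    ∑ j : Fin n, ((if j = m then (1 : R) else 0) - if (j : ℕ) + 1 = m then 1 else 0) = 0 := by
  have hpred : ∀ j : Fin n, (j : ℕ) + 1 = m ↔ j = ⟨m - 1, by omega⟩ := by
    intro j
    simp only [Fin.ext_iff]
    omega
  simp [sum_sub_distrib, hpred]

theorem Fin.exists_notMem_range_le_val {n k : ℕ} (hk : k < n) (f : Fin k → Fin n) :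
    ∃ m : Fin n, n - k - 1 ≤ (m : ℕ) ∧ m ∉ Set.range f := by
  obtain ⟨m, hm_ge, hm_miss⟩ := exists_mem_notMem_of_card_lt_card
    (s := univ.image f) (t := Ici (⟨n - k - 1, by omega⟩ : Fin n)) <| by
      rw [Fin.card_Ici]
      exact (card_image_le.trans_eq (card_fin k)).trans_lt (by simp; omega)
  exact ⟨m, by simpa [Fin.le_def] using hm_ge, by simpa using hm_miss⟩

/-- For `n > k + 1`, the element `ν` of `ℚ F([n],[n])` which is the expansion of the
tensor `e_1 ⊗ ⋯ ⊗ e_{n-k-1} ⊗ (e_{n-k} - e_{n-k-1}) ⊗ ⋯ ⊗ (e_n - e_{n-1})`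
(in 0-indexed form: the `i`-th factor is `e_i` for `i < n-k-1`, and `e_i - e_{i-1}` for
`i ≥ n-k-1`) annihilates every function `f : [k] → [n]` under precomposition. -/
theorem upper_squisher_annihilates (n k : ℕ) (h : k + 1 < n) (f : Fin k → Fin n) :
    Finsupp.lmapDomain ℚ ℚ (fun g : Fin n → Fin n => g ∘ f)
      (tensorExpand n (fun i j =>
        (if j = i then (1 : ℚ) else 0) -
          (if n - k - 1 ≤ (i : ℕ) ∧ (j : ℕ) + 1 = (i : ℕ) then 1 else 0))) = 0 := by
  obtain ⟨m, hm_ge, hm_miss⟩ := Fin.exists_notMem_range_le_val (by omega) f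
  set v : Fin n → Fin n → ℚ := fun i j =>
    (if j = i then (1 : ℚ) else 0) -
      (if n - k - 1 ≤ (i : ℕ) ∧ (j : ℕ) + 1 = (i : ℕ) then 1 else 0) with hv
  refine mapDomain_comp_pureTensor_eq_zero v f hm_miss ?_
  simpa only [hv, hm_ge, true_and] using sum_single_sub_single_pred (R := ℚ) m (by omega)
end
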